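/- arXiv:1502.05591 — 3 statements merged into one kernel-verified Lean document; each statement's English description precedes it below -/
import Mathlib

section
/- There is no p∈[1,∞] and no norm ‖·‖_p on ℝ² such that for all u_1,u_2∈ℝ: max{0,1-|u_1|}·max{0,1-|u_2|} = max{0,1-‖(u_1,u_2)‖_p}. More generally, there is no norm N on ℝ² such that max{0,1-|u_1|}·max{0,1-|u_2|} = max{0,1-N(u_1,u_2)} for all (u_1,u_2)∈ℝ². -/
/-!
On the diagonal `u = v = t ∈ [0, 1)` the identity forces `N t t = 1 - (1 - t)² = 2t - t²`,
while homogeneity forces `N t t = t · N 1 1`. Hence `N 1 1 = 2 - t` for every `t ∈ (0, 1)`,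
which is absurd.
-/

lemma eq_one_sub_of_max_zero_one_sub_eq {b x : ℝ} (hb : 0 < b) (h : max 0 (1 - x) = b) :
    x = 1 - b := by
  rcases max_cases 0 (1 - x) with ⟨hm, -⟩ | ⟨hm, -⟩ <;> linarith

lemma diag_eq_of_triangle_product_eq {N : ℝ → ℝ → ℝ}
    (h : ∀ u v : ℝ, max 0 (1 - |u|) * max 0 (1 - |v|) = max 0 (1 - N u v))
    {t : ℝ} (ht₀ : 0 ≤ t) (ht₁ : t < 1) : N t t = 2 * t - t ^ 2 := by
  have hmax : max 0 (1 - N t t) = (1 - t) ^ 2 := by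
    rw [← h, abs_of_nonneg ht₀, max_eq_right (by linarith), sq]
  have hpos : 0 < (1 - t) ^ 2 := by nlinarith
  rw [eq_one_sub_of_max_zero_one_sub_eq hpos hmax]
  ring

/-- There is no norm `N` on ℝ² such that
`max 0 (1-|u₁|) * max 0 (1-|u₂|) = max 0 (1 - N (u₁,u₂))` for all `(u₁,u₂)`;
i.e. the product of two triangular membership functions is not a radial
function of any norm. -/
theorem product_of_triangles_not_radial :
    ¬ ∃ N : ℝ → ℝ → ℝ,
      (∀ u v, 0 ≤ N u v) ∧
      (∀ u v, N u v = 0 ↔ (u = 0 ∧ v = 0)) ∧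
      (∀ (c u v : ℝ), N (c * u) (c * v) = |c| * N u v) ∧
      (∀ u₁ v₁ u₂ v₂, N (u₁ + u₂) (v₁ + v₂) ≤ N u₁ v₁ + N u₂ v₂) ∧
      (∀ u v : ℝ,
        max 0 (1 - |u|) * max 0 (1 - |v|) = max 0 (1 - N u v)) := by
  rintro ⟨N, -, -, hhom, -, hprod⟩
  have hN11 : ∀ t : ℝ, 0 < t → t < 1 → N 1 1 = 2 - t := by
    intro t ht₀ ht₁
    have hdiag := hhom t 1 1
    rw [mul_one, abs_of_pos ht₀, diag_eq_of_triangle_product_eq hprod ht₀.le ht₁] at hdiag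
    have : t * (2 - t) = t * N 1 1 := by linear_combination hdiag
    exact (mul_left_cancel₀ ht₀.ne' this).symm
  linarith [hN11 (1 / 2) (by norm_num) (by norm_num), hN11 (1 / 4) (by norm_num) (by norm_num)]
end

section
/- Let T be a continuous Archimedean t-norm with continuous additive generator t and pseudo-inverse t^(-1). Fix q>0, p∈[1,∞), and define act(z) = t^(-1)(q z^p). Define A_{ji}(x_i) = act(|x_i - a_{ji}|/b_{ji}) with b_{ji}>0. Then the antecedent A_j(x) = T(A_{j1}(x_1),...,A_{jn}(x_n)) satisfies the radial property: A_j(x) = act(‖x - a_j‖_{p,b_j}), where ‖u‖_{p,b} = (Σ_i |u_i/b_i|^p)^{1/p}. -/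
/-!
Since `t ∘ tinv` is truncation at `t 0`, and truncating both summands before adding does not
change the truncated sum, `tinv` carries `(ℝ≥0∞, +, 0)` homomorphically to `([0, 1], T, 1)`.
So the fold of `T` over the values `tinv (q cᵢ ^ p)` is `tinv (q ∑ cᵢ ^ p)`, and
`q ∑ cᵢ ^ p = q ‖c‖ₚ ^ p`.
-/

open Set ENNReal

/-- The n-ary extension of a binary operation by associativity. -/
def tnormFold (T : ℝ → ℝ → ℝ) : List ℝ → ℝ
  | [] => 1
  | [a] => a
  | a :: b :: rest => T a (tnormFold T (b :: rest))

lemma min_min_add_min (c z w : ℝ≥0∞) : min c (min c z + min c w) = min c (z + w) := by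
  rcases le_total z c with hz | hz <;> rcases le_total w c with hw | hw <;>
    simp [*, le_add_right, le_add_left]

lemma tnormFold_map_eq_sum {M : Type*} [AddMonoid M] (T : ℝ → ℝ → ℝ) (g : M → ℝ)
    (hg0 : g 0 = 1) (hgT : ∀ z w, T (g z) (g w) = g (z + w)) (l : List M) :
    tnormFold T (l.map g) = g l.sum := by
  induction l with
  | nil => exact hg0.symm
  | cons z l ih =>
    cases l with
    | nil => simp [tnormFold]
    | cons w l =>
      rw [List.map_cons, List.map_cons, tnormFold, ← List.map_cons, ih, hgT, ← List.sum_cons]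

section PseudoInverse

variable {t : ℝ → ℝ≥0∞} {tinv : ℝ≥0∞ → ℝ}

lemma pseudoInverse_eq_of_min_eq (hanti : StrictAntiOn t (Icc 0 1))
    (htinv : ∀ z, tinv z ∈ Icc 0 1 ∧ t (tinv z) = min (t 0) z) {z w : ℝ≥0∞}
    (h : min (t 0) z = min (t 0) w) : tinv z = tinv w :=
  hanti.injOn (htinv z).1 (htinv w).1 (by rw [(htinv z).2, (htinv w).2, h])

lemma pseudoInverse_zero (hanti : StrictAntiOn t (Icc 0 1)) (ht1 : t 1 = 0)
    (htinv : ∀ z, tinv z ∈ Icc 0 1 ∧ t (tinv z) = min (t 0) z) : tinv 0 = 1 :=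
  hanti.injOn (htinv 0).1 (right_mem_Icc.2 zero_le_one) (by rw [(htinv 0).2, ht1, min_zero])

lemma tnorm_pseudoInverse_pseudoInverse (T : ℝ → ℝ → ℝ) (hanti : StrictAntiOn t (Icc 0 1))
    (htinv : ∀ z, tinv z ∈ Icc 0 1 ∧ t (tinv z) = min (t 0) z)
    (hT : ∀ a ∈ Icc (0 : ℝ) 1, ∀ b ∈ Icc (0 : ℝ) 1, T a b = tinv (t a + t b)) (z w : ℝ≥0∞) :
    T (tinv z) (tinv w) = tinv (z + w) := by
  rw [hT _ (htinv z).1 _ (htinv w).1, (htinv z).2, (htinv w).2]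
  exact pseudoInverse_eq_of_min_eq hanti htinv (min_min_add_min _ _ _)

end PseudoInverse

theorem archimedean_tnorm_radial_property_general
    (T : ℝ → ℝ → ℝ) (t : ℝ → ℝ≥0∞) (tinv : ℝ≥0∞ → ℝ)
    (hanti : StrictAntiOn t (Icc (0:ℝ) 1))
    (ht1 : t 1 = 0)
    (htinv : ∀ z : ℝ≥0∞, tinv z ∈ Icc (0:ℝ) 1 ∧ t (tinv z) = min (t 0) z)
    (hT : ∀ a ∈ Icc (0:ℝ) 1, ∀ b ∈ Icc (0:ℝ) 1, T a b = tinv (t a + t b))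
    (q p : ℝ) (hq : 0 < q) (hp : 1 ≤ p)
    (act : ℝ → ℝ) (hact : ∀ z, act z = tinv (ENNReal.ofReal (q * z ^ p)))
    (n : ℕ)
    (a b : Fin n → ℝ) (hb : ∀ i, 0 < b i) (x : Fin n → ℝ) :
    tnormFold T (List.ofFn (fun i => act (|x i - a i| / b i)))
      = act ((∑ i, (|x i - a i| / b i) ^ p) ^ (1 / p)) := by
  set c : Fin n → ℝ := fun i => |x i - a i| / b i
  have hc : ∀ i, 0 ≤ c i := fun i => div_nonneg (abs_nonneg _) (hb i).le
  have hqc : ∀ i ∈ Finset.univ, 0 ≤ q * c i ^ p := fun i _ =>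
    mul_nonneg hq.le (Real.rpow_nonneg (hc i) p)
  have hfold := tnormFold_map_eq_sum T tinv (pseudoInverse_zero hanti ht1 htinv)
    (tnorm_pseudoInverse_pseudoInverse T hanti htinv hT)
    (List.ofFn fun i => ENNReal.ofReal (q * c i ^ p))
  calc tnormFold T (List.ofFn fun i => act (c i))
      = tinv (∑ i, ENNReal.ofReal (q * c i ^ p)) := by
        rw [← List.sum_ofFn, ← hfold, List.map_ofFn]
        simp only [Function.comp_def, hact]
    _ = act ((∑ i, c i ^ p) ^ (1 / p)) := by
        have hsum : 0 ≤ ∑ i, c i ^ p := Finset.sum_nonneg fun i _ => Real.rpow_nonneg (hc i) p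
        rw [hact, one_div, Real.rpow_inv_rpow hsum (by linarith), Finset.mul_sum,
          ENNReal.ofReal_sum_of_nonneg hqc]

/-- For a continuous Archimedean t-norm `T` with additive generator `t` and
pseudo-inverse `tinv`, the `act` function `act z = tinv (q z^p)` makes the
antecedent `T(A_{j1}(x₁),...,A_{jn}(xₙ))` with
`A_{ji}(xᵢ) = act(|xᵢ - aᵢ|/bᵢ)` satisfy the radial property with the scaled
ℓ_p norm. -/
theorem archimedean_tnorm_radial_property
    (T : ℝ → ℝ → ℝ) (t : ℝ → ℝ≥0∞) (tinv : ℝ≥0∞ → ℝ)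
    (hcont : ContinuousOn t (Icc (0:ℝ) 1))
    (hanti : StrictAntiOn t (Icc (0:ℝ) 1))
    (ht1 : t 1 = 0)
    (htinv : ∀ z : ℝ≥0∞, tinv z ∈ Icc (0:ℝ) 1 ∧ t (tinv z) = min (t 0) z)
    (hT : ∀ a ∈ Icc (0:ℝ) 1, ∀ b ∈ Icc (0:ℝ) 1, T a b = tinv (t a + t b))
    (q p : ℝ) (hq : 0 < q) (hp : 1 ≤ p)
    (act : ℝ → ℝ) (hact : ∀ z, act z = tinv (ENNReal.ofReal (q * z ^ p)))
    (n : ℕ) (hn : 0 < n)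
    (a b : Fin n → ℝ) (hb : ∀ i, 0 < b i) (x : Fin n → ℝ) :
    tnormFold T (List.ofFn (fun i => act (|x i - a i| / b i)))
      = act ((∑ i, (|x i - a i| / b i) ^ p) ^ (1 / p)) :=
  archimedean_tnorm_radial_property_general T t tinv hanti ht1 htinv hT q p hq hp act hact n a b hb
    x
end

section
/- Consider m rules with parameters a_j∈ℝⁿ, b_j∈ℝ₊ⁿ, c_j∈ℝ, d_j>0, s_j≥0, and for x∈ℝⁿ define I_j⁺(x) = [c_j - d_j‖x-a_j‖_{p,b_j} - s_j, c_j + d_j‖x-a_j‖_{p,b_j} + s_j]. If for every pair j,k ∈ {1,...,m}: |c_j - c_k| - (s_j + s_k) ≤ min{d_j α_j, d_k α_k}·‖a_j - a_k‖_p, where α_j = 1/max_i b_{ji} and ‖·‖_p is the unscaled ℓ_p norm, then ⋂_{j=1}^m I_j⁺(x) ≠ ∅ for every x ∈ ℝⁿ. -/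
open Set Finset

/-!
For fixed `x` put `N_j = ‖x - a_j‖_{p,b_j}`. Since every `b_{ji} ≤ max_i b_{ji}`, the scaled norm dominates
`α_j ‖·‖_p`, so Minkowski's inequality `‖a_j - a_k‖_p ≤ ‖x - a_j‖_p + ‖x - a_k‖_p` and the coherence condition give
`|c_j - c_k| ≤ s_j + s_k + d_j N_j + d_k N_k`: the lower end of every interval `I_j⁺(x)` lies below the upper end of
every other one. Finitely many pairwise intersecting intervals of a line have a common point, the largest lower end.
-/

theorem nonempty_iInter_Icc_of_forall_le {α ι : Type*} [Lattice α] [Nonempty α] [Fintype ι]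
    {l u : ι → α} (h : ∀ j k, l j ≤ u k) : (⋂ j, Icc (l j) (u j)).Nonempty := by
  cases isEmpty_or_nonempty ι
  · simp
  · exact ⟨univ.sup' univ_nonempty l,
      mem_iInter.2 fun j => ⟨le_sup' l (mem_univ j), sup'_le _ _ fun k _ => h k j⟩⟩

section PNorm

variable {ι : Type*} [Fintype ι] {p : ℝ}

noncomputable def pNorm (p : ℝ) (u : ι → ℝ) : ℝ := (∑ i, |u i| ^ p) ^ (1 / p)

noncomputable def scaledPNorm (p : ℝ) (b u : ι → ℝ) : ℝ := (∑ i, (|u i| / b i) ^ p) ^ (1 / p)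

theorem pNorm_nonneg (u : ι → ℝ) : 0 ≤ pNorm p u :=
  Real.rpow_nonneg (sum_nonneg fun _ _ => Real.rpow_nonneg (abs_nonneg _) _) _

theorem pNorm_sub_comm (u v : ι → ℝ) : pNorm p (u - v) = pNorm p (v - u) := by
  simp only [pNorm, Pi.sub_apply, abs_sub_comm]

theorem pNorm_sub_le (hp : 1 ≤ p) (u v w : ι → ℝ) :
    pNorm p (u - w) ≤ pNorm p (u - v) + pNorm p (v - w) := by
  have := Real.Lp_add_le univ (u - v) (v - w) hp
  simpa only [pNorm, Pi.sub_apply, sub_add_sub_cancel] using this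

theorem scaledPNorm_const {M : ℝ} (hM : 0 ≤ M) (hp : p ≠ 0) (u : ι → ℝ) :
    scaledPNorm p (fun _ => M) u = M⁻¹ * pNorm p u := by
  have hterm : ∀ i, (|u i| / M) ^ p = M⁻¹ ^ p * |u i| ^ p := fun i => by
    rw [div_eq_inv_mul, Real.mul_rpow (inv_nonneg.2 hM) (abs_nonneg _)]
  simp only [scaledPNorm, pNorm, hterm, ← mul_sum]
  rw [Real.mul_rpow (by positivity) (sum_nonneg fun i _ => by positivity), one_div,
    Real.rpow_rpow_inv (inv_nonneg.2 hM) hp]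

theorem scaledPNorm_le_of_le {b b' : ι → ℝ} (hb : ∀ i, 0 < b i) (hbb' : ∀ i, b i ≤ b' i)
    (hp : 0 ≤ p) (u : ι → ℝ) : scaledPNorm p b' u ≤ scaledPNorm p b u := by
  refine Real.rpow_le_rpow (sum_nonneg fun i _ => ?_) (sum_le_sum fun i _ => ?_) (by positivity)
  · exact Real.rpow_nonneg (div_nonneg (abs_nonneg _) ((hb i).le.trans (hbb' i))) _
  · exact Real.rpow_le_rpow (div_nonneg (abs_nonneg _) ((hb i).le.trans (hbb' i)))
      (div_le_div_of_nonneg_left (abs_nonneg _) (hb i) (hbb' i)) hp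

theorem min_mul_pNorm_sub_le_add (hp : 1 ≤ p) {w v : ℝ} (hw : 0 ≤ w) (hv : 0 ≤ v)
    (x y z : ι → ℝ) :
    min w v * pNorm p (y - z) ≤ w * pNorm p (x - y) + v * pNorm p (x - z) :=
  calc min w v * pNorm p (y - z)
      ≤ min w v * (pNorm p (x - y) + pNorm p (x - z)) := by
        rw [pNorm_sub_comm x y]
        exact mul_le_mul_of_nonneg_left (pNorm_sub_le hp y x z) (le_min hw hv)
    _ ≤ w * pNorm p (x - y) + v * pNorm p (x - z) := by
        rw [mul_add]
        exact add_le_add (mul_le_mul_of_nonneg_right (min_le_left w v) (pNorm_nonneg _))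
          (mul_le_mul_of_nonneg_right (min_le_right w v) (pNorm_nonneg _))

theorem inv_sup'_mul_pNorm_le_scaledPNorm (h : (univ : Finset ι).Nonempty) {b : ι → ℝ}
    (hb : ∀ i, 0 < b i) (hp : 0 < p) (u : ι → ℝ) :
    (univ.sup' h b)⁻¹ * pNorm p u ≤ scaledPNorm p b u := by
  obtain ⟨i, -⟩ := h
  rw [← scaledPNorm_const (le_sup'_of_le b (mem_univ i) (hb i).le) hp.ne']
  exact scaledPNorm_le_of_le hb (fun i => le_sup' b (mem_univ i)) hp.le u

end PNorm

theorem radial_coherence_sufficient_general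
    (n m : ℕ) (hnne : (Finset.univ : Finset (Fin n)).Nonempty)
    (p : ℝ) (hp : 1 ≤ p)
    (a : Fin m → Fin n → ℝ) (b : Fin m → Fin n → ℝ) (hb : ∀ j i, 0 < b j i)
    (c d s : Fin m → ℝ) (hd : ∀ j, 0 < d j)
    (hcoh : ∀ j k : Fin m,
      |c j - c k| - (s j + s k) ≤
        min (d j * (Finset.univ.sup' hnne (b j))⁻¹)
            (d k * (Finset.univ.sup' hnne (b k))⁻¹)
          * (∑ i, |a j i - a k i| ^ p) ^ (1 / p)) :
    ∀ x : Fin n → ℝ,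
      (⋂ j, Icc
        (c j - d j * (∑ i, (|x i - a j i| / b j i) ^ p) ^ (1 / p) - s j)
        (c j + d j * (∑ i, (|x i - a j i| / b j i) ^ p) ^ (1 / p) + s j)).Nonempty := by
  intro x
  set α : Fin m → ℝ := fun j => (univ.sup' hnne (b j))⁻¹
  have hdα : ∀ j, 0 ≤ d j * α j := fun j => by
    obtain ⟨i, -⟩ := hnne
    exact mul_nonneg (hd j).le (inv_nonneg.2 (le_sup'_of_le (b j) (mem_univ i) (hb j i).le))
  have hN : ∀ j, d j * α j * pNorm p (x - a j) ≤ d j * scaledPNorm p (b j) (x - a j) := fun j => by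
    rw [mul_assoc]
    exact mul_le_mul_of_nonneg_left
      (inv_sup'_mul_pNorm_le_scaledPNorm hnne (hb j) (by linarith) _) (hd j).le
  refine nonempty_iInter_Icc_of_forall_le fun j k => ?_
  change c j - d j * scaledPNorm p (b j) (x - a j) - s j ≤
    c k + d k * scaledPNorm p (b k) (x - a k) + s k
  have hcoh' : |c j - c k| - (s j + s k) ≤ min (d j * α j) (d k * α k) * pNorm p (a j - a k) :=
    hcoh j k
  linarith [le_abs_self (c j - c k), hN j, hN k,
    min_mul_pNorm_sub_le_add hp (hdα j) (hdα k) x (a j) (a k)]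

/-- Sufficient condition for coherence of a radial implicative fuzzy system:
if for every pair of rules `j,k`,
`|c_j - c_k| - (s_j + s_k) ≤ min{d_j α_j, d_k α_k} · ‖a_j - a_k‖_p` where
`α_j = 1 / max_i b_{ji}`, then the intersection of the positive output
intervals `I_j⁺(x)` is nonempty for every input `x`. -/
theorem radial_coherence_sufficient
    (n m : ℕ) (hnne : (Finset.univ : Finset (Fin n)).Nonempty)
    (p : ℝ) (hp : 1 ≤ p)
    (a : Fin m → Fin n → ℝ) (b : Fin m → Fin n → ℝ) (hb : ∀ j i, 0 < b j i)
    (c d s : Fin m → ℝ) (hd : ∀ j, 0 < d j) (hs : ∀ j, 0 ≤ s j)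
    (hcoh : ∀ j k : Fin m,
      |c j - c k| - (s j + s k) ≤
        min (d j * (Finset.univ.sup' hnne (b j))⁻¹)
            (d k * (Finset.univ.sup' hnne (b k))⁻¹)
          * (∑ i, |a j i - a k i| ^ p) ^ (1 / p)) :
    ∀ x : Fin n → ℝ,
      (⋂ j, Icc
        (c j - d j * (∑ i, (|x i - a j i| / b j i) ^ p) ^ (1 / p) - s j)
        (c j + d j * (∑ i, (|x i - a j i| / b j i) ^ p) ^ (1 / p) + s j)).Nonempty :=
  radial_coherence_sufficient_general n m hnne p hp a b hb c d s hd hcoh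
end
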